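/- Let m ≥ 0, σ ∈ {−1,0,1} with m+σ ≥ 0, α > −1, and l,k ≥ 0 be integers. Then the spherinder basis functions Ψ^{σ,α}_{m,l,k} are orthonormal under the inner product ⟨f,g⟩ = 2^{−(2+α+1/2)}∫∫∫ f ḡ (1−η²)^α (1−t)^{α+1/2} dt dφ dη over t,η ∈ [−1,1], φ ∈ [0,2π): ⟨Ψ^{σ,α}_{m,l,k}, Ψ^{σ,α}_{m',l',k'}⟩ = δ_{mm'} δ_{ll'} δ_{kk'}. -/

import Mathlib

open Real MeasureTheory

noncomputable def gbinom (α : ℝ) (k : ℕ) : ℝ :=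
  (∏ i ∈ Finset.range k, (α - i)) / (Nat.factorial k)

noncomputable def jacobiP (n : ℕ) (a b : ℝ) (x : ℝ) : ℝ :=
  ∑ s ∈ Finset.range (n + 1),
    gbinom (n + a) (n - s) * gbinom (n + b) s * ((x - 1) / 2) ^ s * ((x + 1) / 2) ^ (n - s)

noncomputable def jacobiNormSq (n : ℕ) (a b : ℝ) : ℝ :=
  ∫ t in (-1 : ℝ)..1, (1 - t) ^ a * (1 + t) ^ b * (jacobiP n a b t) ^ 2

noncomputable def jacobiPn (n : ℕ) (a b : ℝ) (x : ℝ) : ℝ :=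
  jacobiP n a b x / Real.sqrt (jacobiNormSq n a b)

noncomputable def Nalpha (α : ℝ) : ℝ := Real.sqrt (2 * Real.pi / 2 ^ (2 + α + 1 / 2))

noncomputable def Psi (σ : ℤ) (α : ℝ) (m : ℤ) (l k : ℕ) (t η φ : ℝ) : ℂ :=
  (1 / (Nalpha α : ℂ)) * Complex.exp (Complex.I * m * φ) *
    ((1 + t) ^ (((|m| + σ : ℤ) : ℝ) / 2) : ℝ) * ((1 - t) ^ ((l : ℝ) / 2) : ℝ) *
    (jacobiPn l α α η : ℝ) * (jacobiPn k (l + α + 1 / 2) ((|m| + σ : ℤ) : ℝ) t : ℝ)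

/-!
The integrand factors into a function of `η`, one of `φ` and one of `t`, so the triple integral
is a product of three one-dimensional integrals. The `φ`-integral is `2π δ_{mm'}`; the
`η`-integral is the orthonormality of `P_l^{(α,α)}` for the weight `(1-η)^α (1+η)^α = (1-η²)^α`;
and for `m = m'`, `l = l'` the half-integer powers of `1 ± t` in `Ψ` combine with `(1-t)^{α+1/2}`
into the weight of `P_k^{(l+α+1/2, |m|+σ)}`, so the `t`-integral is `δ_{kk'}`. The constant
`2^{-(2+α+1/2)} · 2π / N_α²` is `1`.

Orthogonality of Jacobi polynomials is proved by induction on the degree. The lowering identity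
`d/dt [(1-t)^{a+1} (1+t)^{b+1} P_n^{(a+1,b+1)}] = -2(n+1) (1-t)^a (1+t)^b P_{n+1}^{(a,b)}`
and an integration by parts, whose boundary terms vanish since `a + 1, b + 1 > 0`, turn
`∫ (1-t)^a (1+t)^b P_{n+1}^{(a,b)} q` into a multiple of
`∫ (1-t)^{a+1} (1+t)^{b+1} P_n^{(a+1,b+1)} q'`.
-/

lemma gbinom_zero (x : ℝ) : gbinom x 0 = 1 := by simp [gbinom]

lemma succ_mul_gbinom_succ (x : ℝ) (k : ℕ) :
    ((k : ℝ) + 1) * gbinom x (k + 1) = (x - k) * gbinom x k := by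
  simp only [gbinom, Finset.prod_range_succ, Nat.factorial_succ]
  push_cast
  field_simp

lemma gbinom_pos {x : ℝ} {k : ℕ} (hx : (k : ℝ) - 1 < x) : 0 < gbinom x k := by
  refine div_pos (Finset.prod_pos fun i hi => ?_) (by positivity)
  have : (i : ℝ) + 1 ≤ k := by exact_mod_cast Finset.mem_range.mp hi
  linarith

open Polynomial in
noncomputable def jacobiPoly (n : ℕ) (a b : ℝ) : ℝ[X] :=
  ∑ s ∈ Finset.range (n + 1),
    C (gbinom (n + a) (n - s) * gbinom (n + b) s) * (C (1 / 2) * (X - 1)) ^ s *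
      (C (1 / 2) * (X + 1)) ^ (n - s)

lemma eval_jacobiPoly (n : ℕ) (a b x : ℝ) : (jacobiPoly n a b).eval x = jacobiP n a b x := by
  simp only [jacobiPoly, jacobiP, Polynomial.eval_finsetSum]
  refine Finset.sum_congr rfl fun s _ => ?_
  simp only [Polynomial.eval_mul, Polynomial.eval_C, Polynomial.eval_pow, Polynomial.eval_sub,
    Polynomial.eval_add, Polynomial.eval_X, Polynomial.eval_one]
  ring

lemma natDegree_jacobiPoly_le (n : ℕ) (a b : ℝ) : (jacobiPoly n a b).natDegree ≤ n := by
  refine Polynomial.natDegree_sum_le_of_forall_le _ _ fun s hs => ?_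
  have hsn : s ≤ n := Nat.lt_succ_iff.mp (Finset.mem_range.mp hs)
  compute_degree
  omega

lemma jacobiP_one (n : ℕ) (a b : ℝ) : jacobiP n a b 1 = gbinom (n + a) n := by
  rw [jacobiP, Finset.sum_eq_single 0]
  · norm_num [gbinom_zero]
  · intro s _ hs
    simp [zero_pow hs]
  · simp

lemma jacobiPoly_ne_zero (n : ℕ) (a b : ℝ) (ha : -1 < a) : jacobiPoly n a b ≠ 0 := by
  intro h
  have := gbinom_pos (x := n + a) (k := n) (by linarith)
  rw [← jacobiP_one n a b, ← eval_jacobiPoly, h] at this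
  simp at this

lemma continuous_jacobiP (n : ℕ) (a b : ℝ) : Continuous (jacobiP n a b) := by
  simpa [funext (eval_jacobiPoly n a b)] using (jacobiPoly n a b).continuous

noncomputable def jacobiPDeriv (n : ℕ) (a b : ℝ) (x : ℝ) : ℝ :=
  ∑ s ∈ Finset.range (n + 1), gbinom (n + a) (n - s) * gbinom (n + b) s *
    (((s : ℝ) * ((x - 1) / 2) ^ (s - 1) * (1 / 2)) * ((x + 1) / 2) ^ (n - s)
      + ((x - 1) / 2) ^ s * (((n - s : ℕ) : ℝ) * ((x + 1) / 2) ^ (n - s - 1) * (1 / 2)))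

lemma hasDerivAt_jacobiP (n : ℕ) (a b x : ℝ) :
    HasDerivAt (jacobiP n a b) (jacobiPDeriv n a b x) x := by
  have hu : HasDerivAt (fun y : ℝ => (y - 1) / 2) (1 / 2) x :=
    ((hasDerivAt_id x).sub_const 1).div_const 2
  have hv : HasDerivAt (fun y : ℝ => (y + 1) / 2) (1 / 2) x :=
    ((hasDerivAt_id x).add_const 1).div_const 2
  refine HasDerivAt.fun_sum fun s _ => ?_
  refine (((hu.pow s).const_mul _).mul (hv.pow (n - s))).congr_deriv ?_
  simp only [Pi.pow_apply]
  ring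

lemma natCast_mul_pow_pred_mul (w : ℝ) (s : ℕ) : (s : ℝ) * w ^ (s - 1) * w = s * w ^ s := by
  cases s with
  | zero => simp
  | succ t => rw [pow_succ]; push_cast; ring

lemma gbinom_mul_gbinom_shift (x y : ℝ) (i k : ℕ) :
    (x - k) * gbinom x k * gbinom y (i + 1) + (y - i) * gbinom x (k + 1) * gbinom y i
      = (i + k + 2) * (gbinom x (k + 1) * gbinom y (i + 1)) := by
  linear_combination (-gbinom y (i + 1)) * succ_mul_gbinom_succ x k
    - gbinom x (k + 1) * succ_mul_gbinom_succ y i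

lemma sum_range_succ_add_eq_of_shift {M : Type*} [AddCommMonoid M] (n : ℕ) (P Q G : ℕ → M)
    (h0 : P 0 = G 0) (hn : Q n = G (n + 1))
    (hmid : ∀ i < n, P (i + 1) + Q i = G (i + 1)) :
    ∑ s ∈ Finset.range (n + 1), (P s + Q s) = ∑ s ∈ Finset.range (n + 2), G s := by
  rw [Finset.sum_add_distrib, Finset.sum_range_succ' P n, Finset.sum_range_succ Q n,
    Finset.sum_range_succ G (n + 1), Finset.sum_range_succ' G n, h0, hn,
    ← Finset.sum_congr rfl fun i hi => hmid i (Finset.mem_range.mp hi), Finset.sum_add_distrib]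
  abel

lemma jacobiP_lowering_expand (n : ℕ) (a b x : ℝ) :
    -(a * (1 + x)) * jacobiP n a b x + b * (1 - x) * jacobiP n a b x
        + (1 - x) * (1 + x) * jacobiPDeriv n a b x
      = ∑ s ∈ Finset.range (n + 1),
        (-2 * (gbinom (n + a) (n - s) * gbinom (n + b) s) * (a + s) *
            (((x - 1) / 2) ^ s * ((x + 1) / 2) ^ (n + 1 - s))
          + -2 * (gbinom (n + a) (n - s) * gbinom (n + b) s) * (b + (n - s : ℕ)) *
            (((x - 1) / 2) ^ (s + 1) * ((x + 1) / 2) ^ (n - s))) := by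
  simp only [jacobiP, jacobiPDeriv, Finset.mul_sum, ← Finset.sum_add_distrib]
  refine Finset.sum_congr rfl fun s hs => ?_
  obtain ⟨r, rfl⟩ : ∃ r, n = s + r := ⟨n - s, by have := Finset.mem_range.mp hs; omega⟩
  rw [show s + r - s = r by omega, show s + r + 1 - s = r + 1 by omega]
  set u := (x - 1) / 2
  set v := (x + 1) / 2
  have hx1 : 1 + x = 2 * v := by ring
  have hx2 : 1 - x = -(2 * u) := by ring
  rw [hx1, hx2]
  linear_combination (-2 * (gbinom ((s + r : ℕ) + a) r * gbinom ((s + r : ℕ) + b) s)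
      * v ^ r * v) * natCast_mul_pow_pred_mul u s
    + (-2 * (gbinom ((s + r : ℕ) + a) r * gbinom ((s + r : ℕ) + b) s)
      * u ^ s * u) * natCast_mul_pow_pred_mul v r

lemma jacobiP_lowering (n : ℕ) (a b x : ℝ) :
    -((a + 1) * (1 + x)) * jacobiP n (a + 1) (b + 1) x
        + (b + 1) * (1 - x) * jacobiP n (a + 1) (b + 1) x
        + (1 - x) * (1 + x) * jacobiPDeriv n (a + 1) (b + 1) x
      = -(2 * ((n : ℝ) + 1)) * jacobiP (n + 1) a b x := by
  have ha : (n : ℝ) + (a + 1) = ((n + 1 : ℕ) : ℝ) + a := by push_cast; ring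
  have hb : (n : ℝ) + (b + 1) = ((n + 1 : ℕ) : ℝ) + b := by push_cast; ring
  rw [jacobiP_lowering_expand, jacobiP, Finset.mul_sum, ha, hb]
  apply sum_range_succ_add_eq_of_shift
  · have := succ_mul_gbinom_succ (((n + 1 : ℕ) : ℝ) + a) n
    simp only [Nat.sub_zero, gbinom_zero, pow_zero]
    push_cast at this ⊢
    linear_combination (2 * ((x + 1) / 2) ^ (n + 1)) * this
  · have := succ_mul_gbinom_succ (((n + 1 : ℕ) : ℝ) + b) n
    simp only [Nat.sub_self, gbinom_zero, pow_zero]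
    push_cast at this ⊢
    linear_combination (2 * ((x - 1) / 2) ^ (n + 1)) * this
  · intro i hi
    obtain ⟨k, rfl⟩ : ∃ k, n = i + k + 1 := ⟨n - i - 1, by omega⟩
    rw [show i + k + 1 - (i + 1) = k by omega, show i + k + 1 - i = k + 1 by omega,
      show i + k + 1 + 1 - (i + 1) = k + 1 by omega]
    have := gbinom_mul_gbinom_shift (((i + k + 1 + 1 : ℕ) : ℝ) + a) (((i + k + 1 + 1 : ℕ) : ℝ) + b) i k
    push_cast at this ⊢
    linear_combination (-2 * ((x - 1) / 2) ^ (i + 1) * ((x + 1) / 2) ^ (k + 1)) * this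

lemma hasDerivAt_weight_mul_jacobiP (n : ℕ) (a b : ℝ) {x : ℝ} (hx : x ∈ Set.Ioo (-1 : ℝ) 1) :
    HasDerivAt (fun y => (1 - y) ^ (a + 1) * (1 + y) ^ (b + 1) * jacobiP n (a + 1) (b + 1) y)
      (-(2 * ((n : ℝ) + 1)) * ((1 - x) ^ a * (1 + x) ^ b * jacobiP (n + 1) a b x)) x := by
  have hx1 : 0 < 1 - x := by linarith [hx.2]
  have hx2 : 0 < 1 + x := by linarith [hx.1]
  have h1 := ((hasDerivAt_id x).const_sub 1).rpow_const (p := a + 1) (Or.inl hx1.ne')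
  have h2 := ((hasDerivAt_id x).const_add 1).rpow_const (p := b + 1) (Or.inl hx2.ne')
  refine ((h1.mul h2).mul (hasDerivAt_jacobiP n (a + 1) (b + 1) x)).congr_deriv ?_
  simp only [id, add_sub_cancel_right, Pi.mul_apply]
  rw [Real.rpow_add_one hx1.ne', Real.rpow_add_one hx2.ne']
  linear_combination ((1 - x) ^ a * (1 + x) ^ b) * jacobiP_lowering n a b x

lemma intervalIntegrable_weight_mul {a b : ℝ} (ha : -1 < a) (hb : -1 < b) {f : ℝ → ℝ}
    (hf : Continuous f) :
    IntervalIntegrable (fun t => (1 - t) ^ a * (1 + t) ^ b * f t) volume (-1) 1 := by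
  have hleft : IntervalIntegrable (fun t : ℝ => (1 + t) ^ b) volume (-1) 0 := by
    simpa [add_comm] using
      (intervalIntegral.intervalIntegrable_rpow' (a := 0) (b := 1) hb).comp_sub_right (-1)
  have hright : IntervalIntegrable (fun t : ℝ => (1 - t) ^ a) volume 0 1 := by
    simpa using
      ((intervalIntegral.intervalIntegrable_rpow' (a := 0) (b := 1) ha).comp_sub_left 1).symm
  refine IntervalIntegrable.trans (b := 0) ?_ ?_
  · refine (hleft.mul_continuousOn (g := fun t => (1 - t) ^ a * f t) ?_).congr fun t _ => by ring
    refine (ContinuousOn.rpow_const (f := fun t => 1 - t) (by fun_prop) fun t ht => ?_).mul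
      hf.continuousOn
    rw [Set.uIcc_of_le (by norm_num)] at ht
    exact Or.inl (by linarith [ht.2] : (0 : ℝ) < 1 - t).ne'
  · refine (hright.mul_continuousOn (g := fun t => (1 + t) ^ b * f t) ?_).congr fun t _ => by ring
    refine (ContinuousOn.rpow_const (f := fun t => 1 + t) (by fun_prop) fun t ht => ?_).mul
      hf.continuousOn
    rw [Set.uIcc_of_le (by norm_num)] at ht
    exact Or.inl (by linarith [ht.1] : (0 : ℝ) < 1 + t).ne'

lemma integral_weight_mul_jacobiP_succ_mul {a b : ℝ} (ha : -1 < a) (hb : -1 < b) (n : ℕ)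
    (q : Polynomial ℝ) :
    2 * ((n : ℝ) + 1) *
        ∫ t in (-1 : ℝ)..1, (1 - t) ^ a * (1 + t) ^ b * (jacobiP (n + 1) a b t * q.eval t)
      = ∫ t in (-1 : ℝ)..1, (1 - t) ^ (a + 1) * (1 + t) ^ (b + 1) *
          (jacobiP n (a + 1) (b + 1) t * q.derivative.eval t) := by
  set G : ℝ → ℝ := fun y => (1 - y) ^ (a + 1) * (1 + y) ^ (b + 1) * jacobiP n (a + 1) (b + 1) y
  have hG : Continuous G :=
    ((Continuous.rpow_const (by fun_prop) fun _ => Or.inr (by linarith)).mul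
      (Continuous.rpow_const (by fun_prop) fun _ => Or.inr (by linarith))).mul
      (continuous_jacobiP n _ _)
  have hG1 : G 1 = 0 := by simp [G, Real.zero_rpow (by linarith : a + 1 ≠ 0)]
  have hGneg : G (-1) = 0 := by simp [G, Real.zero_rpow (by linarith : b + 1 ≠ 0)]
  have hparts := intervalIntegral.integral_mul_deriv_eq_deriv_mul_of_hasDeriv_right
    (u := G) (v := q.eval) (v' := q.derivative.eval)
    (u' := fun x => -(2 * ((n : ℝ) + 1)) * ((1 - x) ^ a * (1 + x) ^ b * jacobiP (n + 1) a b x))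
    hG.continuousOn q.continuous.continuousOn
    (fun x hx => (hasDerivAt_weight_mul_jacobiP n a b
      (by simpa using hx)).hasDerivWithinAt)
    (fun x _ => (q.hasDerivAt x).hasDerivWithinAt)
    ((intervalIntegrable_weight_mul ha hb
      ((continuous_jacobiP (n + 1) a b).const_mul (-(2 * ((n : ℝ) + 1))))).congr
      fun t _ => by ring)
    (q.derivative.continuous.intervalIntegrable _ _)
  have hconst : ∫ x in (-1 : ℝ)..1,
      -(2 * ((n : ℝ) + 1)) * ((1 - x) ^ a * (1 + x) ^ b * jacobiP (n + 1) a b x) * q.eval x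
      = -(2 * ((n : ℝ) + 1)) *
        ∫ t in (-1 : ℝ)..1, (1 - t) ^ a * (1 + t) ^ b * (jacobiP (n + 1) a b t * q.eval t) := by
    rw [← intervalIntegral.integral_const_mul]
    exact intervalIntegral.integral_congr fun t _ => by ring
  have hGq : ∫ t in (-1 : ℝ)..1, (1 - t) ^ (a + 1) * (1 + t) ^ (b + 1) *
      (jacobiP n (a + 1) (b + 1) t * q.derivative.eval t)
      = ∫ x in (-1 : ℝ)..1, G x * q.derivative.eval x :=
    intervalIntegral.integral_congr fun t _ => by simp only [G]; ring
  rw [hGq, hparts, hG1, hGneg, hconst]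
  ring

lemma integral_weight_mul_jacobiP_mul_eval_eq_zero {n : ℕ} {q : Polynomial ℝ}
    (hq : q.natDegree < n) {a b : ℝ} (ha : -1 < a) (hb : -1 < b) :
    ∫ t in (-1 : ℝ)..1, (1 - t) ^ a * (1 + t) ^ b * (jacobiP n a b t * q.eval t) = 0 := by
  induction n generalizing a b q with
  | zero => exact absurd hq (Nat.not_lt_zero _)
  | succ n ih =>
    have hparts := integral_weight_mul_jacobiP_succ_mul ha hb n q
    have hderiv : ∫ t in (-1 : ℝ)..1, (1 - t) ^ (a + 1) * (1 + t) ^ (b + 1) *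
        (jacobiP n (a + 1) (b + 1) t * q.derivative.eval t) = 0 := by
      by_cases hq0 : q.natDegree = 0
      · simp [Polynomial.derivative_of_natDegree_zero hq0]
      · exact ih ((Polynomial.natDegree_derivative_lt hq0).trans_le (by omega))
          (by linarith) (by linarith)
    rw [hderiv] at hparts
    exact (mul_eq_zero.mp hparts).resolve_left (by positivity)

lemma integral_weight_mul_jacobiP_mul_jacobiP_of_ne {a b : ℝ} (ha : -1 < a) (hb : -1 < b)
    {n n' : ℕ} (h : n ≠ n') :
    ∫ t in (-1 : ℝ)..1, (1 - t) ^ a * (1 + t) ^ b * (jacobiP n a b t * jacobiP n' a b t) = 0 := by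
  have key : ∀ {n n' : ℕ}, n' < n →
      ∫ t in (-1 : ℝ)..1, (1 - t) ^ a * (1 + t) ^ b * (jacobiP n a b t * jacobiP n' a b t) = 0 :=
    fun {n n'} hlt => by
      simpa only [eval_jacobiPoly] using integral_weight_mul_jacobiP_mul_eval_eq_zero
        ((natDegree_jacobiPoly_le n' a b).trans_lt hlt) ha hb
  rcases h.lt_or_gt with hlt | hlt
  · simpa only [mul_comm (jacobiP n a b _)] using key hlt
  · exact key hlt

lemma jacobiNormSq_pos (n : ℕ) {a b : ℝ} (ha : -1 < a) (hb : -1 < b) :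
    0 < jacobiNormSq n a b := by
  set f : ℝ → ℝ := fun t => (1 - t) ^ a * (1 + t) ^ b * (jacobiP n a b t) ^ 2
  have hnonneg : 0 ≤ᵐ[volume.restrict (Set.uIoc (-1 : ℝ) 1)] f := by
    rw [Set.uIoc_of_le (by norm_num)]
    refine (ae_restrict_iff' measurableSet_Ioc).mpr (ae_of_all _ fun t ht => ?_)
    have := Real.rpow_nonneg (by linarith [ht.2] : 0 ≤ 1 - t) a
    have := Real.rpow_nonneg (by linarith [ht.1] : 0 ≤ 1 + t) b
    positivity
  refine (intervalIntegral.integral_pos_iff_support_of_nonneg_ae' hnonneg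
    (intervalIntegrable_weight_mul ha hb ((continuous_jacobiP n a b).pow 2))).mpr ⟨by norm_num, ?_⟩
  have hsub : Set.Ioo (-1 : ℝ) 1 \ {x | (jacobiPoly n a b).IsRoot x}
      ⊆ Function.support f ∩ Set.Ioc (-1 : ℝ) 1 := by
    rintro x ⟨hx, hroot⟩
    refine ⟨ne_of_gt ?_, hx.1, hx.2.le⟩
    have := Real.rpow_pos_of_pos (by linarith [hx.2] : 0 < 1 - x) a
    have := Real.rpow_pos_of_pos (by linarith [hx.1] : 0 < 1 + x) b
    have : jacobiP n a b x ≠ 0 := by simpa [Polynomial.IsRoot, eval_jacobiPoly] using hroot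
    positivity
  calc (0 : ENNReal) < volume (Set.Ioo (-1 : ℝ) 1 \ {x | (jacobiPoly n a b).IsRoot x}) := by
        rw [measure_sdiff_null ((Polynomial.finite_setOfPred_isRoot
          (jacobiPoly_ne_zero n a b ha)).measure_zero volume), Real.volume_Ioo]
        norm_num
    _ ≤ volume (Function.support f ∩ Set.Ioc (-1 : ℝ) 1) := measure_mono hsub

lemma jacobiPn_orthonormal {a b : ℝ} (ha : -1 < a) (hb : -1 < b) (n n' : ℕ) :
    ∫ t in (-1 : ℝ)..1, (1 - t) ^ a * (1 + t) ^ b * (jacobiPn n a b t * jacobiPn n' a b t)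
      = if n = n' then 1 else 0 := by
  have hscale :
      ∫ t in (-1 : ℝ)..1, (1 - t) ^ a * (1 + t) ^ b * (jacobiPn n a b t * jacobiPn n' a b t)
      = (∫ t in (-1 : ℝ)..1, (1 - t) ^ a * (1 + t) ^ b * (jacobiP n a b t * jacobiP n' a b t)) /
        (√(jacobiNormSq n a b) * √(jacobiNormSq n' a b)) := by
    rw [← intervalIntegral.integral_div]
    exact intervalIntegral.integral_congr fun t _ => by simp only [jacobiPn]; ring
  rw [hscale]
  split_ifs with h
  · subst h
    have hpos := jacobiNormSq_pos n ha hb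
    rw [Real.mul_self_sqrt hpos.le, div_eq_one_iff_eq hpos.ne', jacobiNormSq]
    simp only [sq]
  · rw [integral_weight_mul_jacobiP_mul_jacobiP_of_ne ha hb h, zero_div]

lemma rpow_half_mul_rpow_half {x : ℝ} (hx : 0 ≤ x) (p : ℝ) :
    x ^ (p / 2) * x ^ (p / 2) = x ^ p := by
  rcases eq_or_ne p 0 with rfl | hp
  · simp
  · rw [← Real.rpow_add' hx (by simpa using hp), add_halves]

lemma rpow_natCast_mul_rpow {x c : ℝ} (hx : 0 ≤ x) (n : ℕ) (hc : -1 < c) :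
    x ^ (n : ℝ) * x ^ c = x ^ (n + c) := by
  rcases n with _ | n
  · simp
  · rw [Real.rpow_add' hx (by push_cast; linarith [(n.cast_nonneg : (0 : ℝ) ≤ n)])]

lemma jacobiPn_orthonormal_one_sub_sq {α : ℝ} (hα : -1 < α) (l l' : ℕ) :
    ∫ η in (-1 : ℝ)..1, jacobiPn l α α η * jacobiPn l' α α η * (1 - η ^ 2) ^ α
      = if l = l' then 1 else 0 := by
  rw [← jacobiPn_orthonormal hα hα]
  refine intervalIntegral.integral_congr fun η hη => ?_
  rw [Set.uIcc_of_le (by norm_num)] at hη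
  rw [show 1 - η ^ 2 = (1 - η) * (1 + η) by ring,
    Real.mul_rpow (by linarith [hη.2]) (by linarith [hη.1])]
  ring

noncomputable def spherinderRadial (α μ : ℝ) (l k : ℕ) (t : ℝ) : ℝ :=
  (1 + t) ^ (μ / 2) * (1 - t) ^ ((l : ℝ) / 2) * jacobiPn k (l + α + 1 / 2) μ t

lemma spherinderRadial_orthonormal {α μ : ℝ} (hα : -1 < α) (hμ : -1 < μ) (l k k' : ℕ) :
    ∫ t in (-1 : ℝ)..1,
        spherinderRadial α μ l k t * spherinderRadial α μ l k' t * (1 - t) ^ (α + 1 / 2)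
      = if k = k' then 1 else 0 := by
  rw [← jacobiPn_orthonormal (a := l + α + 1 / 2) (b := μ)
    (by linarith [(l.cast_nonneg : (0 : ℝ) ≤ l)]) hμ]
  refine intervalIntegral.integral_congr fun t ht => ?_
  rw [Set.uIcc_of_le (by norm_num)] at ht
  have h1 := rpow_half_mul_rpow_half (by linarith [ht.1] : 0 ≤ 1 + t) μ
  have h2 := rpow_half_mul_rpow_half (by linarith [ht.2] : 0 ≤ 1 - t) l
  have h3 := rpow_natCast_mul_rpow (by linarith [ht.2] : 0 ≤ 1 - t) l
    (by linarith : -1 < α + 1 / 2)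
  simp only [spherinderRadial, ← add_assoc] at h3 ⊢
  rw [← h1, ← h3, ← h2]
  ring

lemma integral_exp_I_mul_int_sub (m m' : ℤ) :
    ∫ φ in (0 : ℝ)..(2 * π), Complex.exp (Complex.I * ((m : ℂ) - m') * φ)
      = if m = m' then ((2 * π : ℝ) : ℂ) else 0 := by
  split_ifs with h
  · simp [h]
  · have hne : Complex.I * ((m : ℂ) - m') ≠ 0 :=
      mul_ne_zero Complex.I_ne_zero (sub_ne_zero.mpr (by exact_mod_cast h))
    have hperiod : Complex.I * ((m : ℂ) - m') * ((2 * π : ℝ) : ℂ)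
        = ((m - m' : ℤ) : ℂ) * (2 * π * Complex.I) := by push_cast; ring
    rw [integral_exp_mul_complex hne, hperiod, Complex.exp_int_mul_two_pi_mul_I,
      Complex.ofReal_zero, mul_zero, Complex.exp_zero, sub_self, zero_div]

lemma integral_integral_integral_mul_mul {𝕜 : Type*} [RCLike 𝕜] (f g h : ℝ → 𝕜)
    (a₁ b₁ a₂ b₂ a₃ b₃ : ℝ) :
    ∫ x in a₁..b₁, ∫ y in a₂..b₂, ∫ z in a₃..b₃, f x * g y * h z
      = (∫ x in a₁..b₁, f x) * (∫ y in a₂..b₂, g y) * ∫ z in a₃..b₃, h z := by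
  simp only [intervalIntegral.integral_const_mul, intervalIntegral.integral_mul_const]

lemma Psi_eq (σ : ℤ) (α : ℝ) (m : ℤ) (l k : ℕ) (t η φ : ℝ) :
    Psi σ α m l k t η φ = Complex.exp (Complex.I * m * φ) / (Nalpha α : ℂ) *
      ((jacobiPn l α α η * spherinderRadial α (|m| + σ : ℤ) l k t : ℝ) : ℂ) := by
  simp only [Psi, spherinderRadial]
  push_cast
  ring

lemma Psi_mul_conj_mul_weight (σ : ℤ) (α : ℝ) (m m' : ℤ) (l l' k k' : ℕ) (t η φ : ℝ) :
    Psi σ α m l k t η φ * (starRingEnd ℂ) (Psi σ α m' l' k' t η φ) *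
        (((1 - η ^ 2) ^ α : ℝ) : ℂ) * (((1 - t) ^ (α + 1 / 2) : ℝ) : ℂ)
      = ((jacobiPn l α α η * jacobiPn l' α α η * (1 - η ^ 2) ^ α : ℝ) : ℂ) *
        (Complex.exp (Complex.I * ((m : ℂ) - m') * φ) / ((Nalpha α ^ 2 : ℝ) : ℂ)) *
        ((spherinderRadial α (|m| + σ : ℤ) l k t * spherinderRadial α (|m'| + σ : ℤ) l' k' t *
          (1 - t) ^ (α + 1 / 2) : ℝ) : ℂ) := by
  have hexp : Complex.exp (Complex.I * m * φ) * Complex.exp (-Complex.I * m' * φ)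
      = Complex.exp (Complex.I * ((m : ℂ) - m') * φ) := by
    rw [← Complex.exp_add]
    congr 1
    ring
  simp only [Psi_eq, map_mul, map_div₀, Complex.conj_ofReal, ← Complex.exp_conj,
    Complex.conj_I, map_intCast]
  rw [← hexp]
  push_cast
  ring

lemma two_rpow_mul_Nalpha_sq (α : ℝ) : (2 : ℝ) ^ (2 + α + 1 / 2) * Nalpha α ^ 2 = 2 * π := by
  rw [Nalpha, Real.sq_sqrt (by positivity), mul_div_cancel₀ _ (by positivity)]

theorem spherinder_basis_orthonormal_general (α : ℝ) (hα : α > -1)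
    (σ : ℤ)
    (m m' : ℤ) (hms : 0 ≤ m + σ)
    (l l' k k' : ℕ) :
    (1 / ((2 : ℝ) ^ (2 + α + 1 / 2) : ℝ) : ℂ) *
      ∫ η in (-1 : ℝ)..1, ∫ φ in (0 : ℝ)..(2 * Real.pi), ∫ t in (-1 : ℝ)..1,
        Psi σ α m l k t η φ * (starRingEnd ℂ) (Psi σ α m' l' k' t η φ) *
          (((1 - η ^ 2) ^ α : ℝ) : ℂ) * (((1 - t) ^ (α + 1 / 2) : ℝ) : ℂ)
      = if m = m' ∧ l = l' ∧ k = k' then 1 else 0 := by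
  simp only [Psi_mul_conj_mul_weight]
  rw [integral_integral_integral_mul_mul, intervalIntegral.integral_ofReal,
    intervalIntegral.integral_ofReal, jacobiPn_orthonormal_one_sub_sq hα,
    intervalIntegral.integral_div, integral_exp_I_mul_int_sub]
  by_cases hml : m = m' ∧ l = l'
  · obtain ⟨rfl, rfl⟩ := hml
    have hμ : -1 < ((|m| + σ : ℤ) : ℝ) := by
      exact_mod_cast (by linarith [le_abs_self m] : -1 < |m| + σ)
    have hnorm : ((2 * π : ℝ) : ℂ)
        = (((2 : ℝ) ^ (2 + α + 1 / 2) : ℝ) : ℂ) * ((Nalpha α ^ 2 : ℝ) : ℂ) := by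
      exact_mod_cast (two_rpow_mul_Nalpha_sq α).symm
    rw [spherinderRadial_orthonormal hα hμ]
    rcases eq_or_ne k k' with rfl | hk
    · have hN : ((Nalpha α ^ 2 : ℝ) : ℂ) ≠ 0 := fun h => by simp [h, pi_ne_zero] at hnorm
      simp only [if_true, and_self, Complex.ofReal_one, one_mul, mul_one]
      rw [hnorm, mul_div_cancel_right₀ _ hN, one_div_mul_cancel (by exact_mod_cast (by positivity))]
    · simp [hk]
  · rcases not_and_or.mp hml with h | h <;> simp [h]

/-- For `m, m' ≥ 0`, `σ ∈ {−1,0,1}` with `m+σ ≥ 0`, `m'+σ ≥ 0`, and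
`α > −1`, the spherinder basis functions are orthonormal under the inner product
`⟨f,g⟩ = 2^{−(2+α+1/2)} ∫∫∫ f ḡ (1−η²)^α (1−t)^{α+1/2} dt dφ dη`
over `t, η ∈ [−1,1]`, `φ ∈ [0,2π)`. -/
theorem spherinder_basis_orthonormal (α : ℝ) (hα : α > -1)
    (σ : ℤ) (hσ : σ = -1 ∨ σ = 0 ∨ σ = 1)
    (m m' : ℤ) (hm : 0 ≤ m) (hm' : 0 ≤ m') (hms : 0 ≤ m + σ) (hms' : 0 ≤ m' + σ)
    (l l' k k' : ℕ) :
    (1 / ((2 : ℝ) ^ (2 + α + 1 / 2) : ℝ) : ℂ) *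
      ∫ η in (-1 : ℝ)..1, ∫ φ in (0 : ℝ)..(2 * Real.pi), ∫ t in (-1 : ℝ)..1,
        Psi σ α m l k t η φ * (starRingEnd ℂ) (Psi σ α m' l' k' t η φ) *
          (((1 - η ^ 2) ^ α : ℝ) : ℂ) * (((1 - t) ^ (α + 1 / 2) : ℝ) : ℂ)
      = if m = m' ∧ l = l' ∧ k = k' then 1 else 0 :=
  spherinder_basis_orthonormal_general α hα σ m m' hms l l' k k'
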